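/- arXiv:1003.2744 — 4 statements merged into one kernel-verified Lean document; each statement's English description precedes it below -/
import Mathlib

section
/- The map f(z) = (z - r²/z̄)/(1 - r²) maps the annulus A(r,1) = {z : r < |z| < 1} bijectively onto the punctured unit disk {w : 0 < |w| < 1}, for any 0 < r < 1. -/
/-!
Since `conj z = ‖z‖² / z`, the map is radial: `f z = (φ ‖z‖ / ‖z‖) • z` with profile
`φ s = (s - r² / s) / (1 - r²)`. A radial map sends the annulus `a < ‖z‖ < b` bijectively onto
`c < ‖w‖ < d` as soon as its profile maps `(a, b)` bijectively onto `(c, d)`, and here `φ` is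
continuous and strictly increasing on `[r, 1]` with `φ r = 0` and `φ 1 = 1`.
-/

open Set ComplexConjugate

theorem StrictMonoOn.bijOn_Ioo_of_continuousOn {α δ : Type*} [ConditionallyCompleteLinearOrder α]
    [TopologicalSpace α] [OrderTopology α] [DenselyOrdered α] [LinearOrder δ] [TopologicalSpace δ]
    [OrderClosedTopology δ] {f : α → δ} {a b : α} (hab : a ≤ b) (hmono : StrictMonoOn f (Icc a b))
    (hf : ContinuousOn f (Icc a b)) : BijOn f (Ioo a b) (Ioo (f a) (f b)) := by
  refine ⟨fun s hs => ?_, hmono.injOn.mono Ioo_subset_Icc_self, intermediate_value_Ioo hab hf⟩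
  exact ⟨hmono (left_mem_Icc.2 hab) (Ioo_subset_Icc_self hs) hs.1,
    hmono (Ioo_subset_Icc_self hs) (right_mem_Icc.2 hab) hs.2⟩

theorem norm_smul_div_norm_self {E : Type*} [NormedAddCommGroup E] [NormedSpace ℝ E] {t : ℝ}
    (ht : 0 ≤ t) {z : E} (hz : z ≠ 0) : ‖(t / ‖z‖) • z‖ = t := by
  rw [norm_smul, Real.norm_eq_abs, abs_div, abs_norm, abs_of_nonneg ht,
    div_mul_cancel₀ _ (norm_ne_zero_iff.2 hz)]

theorem Set.BijOn.radial {E : Type*} [NormedAddCommGroup E] [NormedSpace ℝ E] {φ : ℝ → ℝ}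
    {a b c d : ℝ} (ha : 0 ≤ a) (hc : 0 ≤ c) (hφ : BijOn φ (Ioo a b) (Ioo c d)) :
    BijOn (fun z : E => (φ ‖z‖ / ‖z‖) • z) (norm ⁻¹' Ioo a b) (norm ⁻¹' Ioo c d) := by
  have hne {z : E} (hz : ‖z‖ ∈ Ioo a b) : z ≠ 0 := norm_pos_iff.1 (ha.trans_lt hz.1)
  have hnorm {z : E} (hz : ‖z‖ ∈ Ioo a b) : ‖(φ ‖z‖ / ‖z‖) • z‖ = φ ‖z‖ :=
    norm_smul_div_norm_self (hc.trans (hφ.mapsTo hz).1.le) (hne hz)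
  refine ⟨fun z hz => ?_, fun z₁ hz₁ z₂ hz₂ h => ?_, fun w hw => ?_⟩
  · simpa only [mem_preimage, hnorm hz] using hφ.mapsTo hz
  · have hn : ‖z₁‖ = ‖z₂‖ := hφ.injOn hz₁ hz₂ <| by
      simpa only [hnorm hz₁, hnorm hz₂] using congrArg norm h
    have hscalar : φ ‖z₂‖ / ‖z₂‖ ≠ 0 :=
      (div_pos (hc.trans_lt (hφ.mapsTo hz₂).1) (ha.trans_lt hz₂.1)).ne'
    simp only [hn] at h
    exact smul_right_injective E hscalar h
  · obtain ⟨s, hs, hφs⟩ := hφ.surjOn hw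
    have hw0 : w ≠ 0 := norm_pos_iff.1 (hc.trans_lt hw.1)
    have hs_norm : ‖(s / ‖w‖) • w‖ = s := norm_smul_div_norm_self (ha.trans hs.1.le) hw0
    refine ⟨(s / ‖w‖) • w, by rwa [mem_preimage, hs_norm], ?_⟩
    have hs0 : s ≠ 0 := (ha.trans_lt hs.1).ne'
    simp only [hs_norm, hφs, smul_smul]
    rw [div_mul_div_cancel₀ hs0, div_self (norm_ne_zero_iff.2 hw0), one_smul]

noncomputable def annulusProfile (r s : ℝ) : ℝ := (s - r ^ 2 / s) / (1 - r ^ 2)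

theorem strictMonoOn_annulusProfile {r : ℝ} (hr1 : r ^ 2 < 1) :
    StrictMonoOn (annulusProfile r) (Ioi 0) := by
  intro s hs t _ hst
  have : r ^ 2 / t ≤ r ^ 2 / s := div_le_div_of_nonneg_left (sq_nonneg r) hs hst.le
  exact div_lt_div_of_pos_right (by linarith) (sub_pos.2 hr1)

theorem continuousOn_annulusProfile (r : ℝ) : ContinuousOn (annulusProfile r) (Ioi 0) :=
  ContinuousOn.div_const (continuousOn_id.sub (continuousOn_const.div continuousOn_id
    fun _ hs => ne_of_gt hs)) _

theorem annulusProfile_self {r : ℝ} (hr : r ≠ 0) : annulusProfile r r = 0 := by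
  simp [annulusProfile, sq, hr]

theorem annulusProfile_one {r : ℝ} (hr1 : r ^ 2 ≠ 1) : annulusProfile r 1 = 1 := by
  simp [annulusProfile, sub_ne_zero.2 hr1.symm]

theorem sub_sq_div_conj_div_eq_annulusProfile_smul (r : ℝ) (z : ℂ) :
    (z - (r : ℂ) ^ 2 / conj z) / (1 - (r : ℂ) ^ 2) = (annulusProfile r ‖z‖ / ‖z‖) • z := by
  rcases eq_or_ne z 0 with rfl | hz
  · simp
  have hn : (‖z‖ : ℂ) ≠ 0 := by simpa using hz
  have hconj : conj z ≠ 0 := by simpa using hz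
  have hsq : z * conj z = (‖z‖ : ℂ) ^ 2 := Complex.mul_conj' z
  rw [Complex.real_smul, annulusProfile]
  push_cast
  field_simp
  linear_combination (r : ℂ) ^ 2 * (1 - (r : ℂ) ^ 2)⁻¹ * hsq

theorem bijOn_annulusProfile {r : ℝ} (hr : 0 < r) (hr1 : r < 1) :
    BijOn (annulusProfile r) (Ioo r 1) (Ioo 0 1) := by
  have hr2 : r ^ 2 < 1 := pow_lt_one₀ hr.le hr1 two_ne_zero
  have hsub : Icc r 1 ⊆ Ioi 0 := (Icc_subset_Ioi_iff hr1.le).2 hr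
  have h := ((strictMonoOn_annulusProfile hr2).mono hsub).bijOn_Ioo_of_continuousOn hr1.le
    ((continuousOn_annulusProfile r).mono hsub)
  rwa [annulusProfile_self hr.ne', annulusProfile_one hr2.ne] at h

/-- The map `f(z) = (z - r²/z̄)/(1 - r²)` maps the annulus `A(r,1)` bijectively
onto the punctured unit disk, for `0 < r < 1`. -/
theorem stmt0 (r : ℝ) (hr : 0 < r) (hr1 : r < 1) :
    Set.BijOn (fun z : ℂ => (z - ((r : ℂ))^2 / (starRingEnd ℂ z)) / (1 - ((r : ℂ))^2))
      {z : ℂ | r < ‖z‖ ∧ ‖z‖ < 1}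
      {w : ℂ | 0 < ‖w‖ ∧ ‖w‖ < 1} := by
  refine ((bijOn_annulusProfile hr hr1).radial hr.le le_rfl).congr fun z _ => ?_
  exact (sub_sq_div_conj_div_eq_annulusProfile_smul r z).symm
end

section
/- For 0 < r < 1 and ρ satisfying ρ ≤ 2r/(1+r²), the map f(z) = ((rρ-1)/(r²-1))·z + ((r²-rρ)/(r²-1))·(1/z̄) maps the annulus {r < |z| < 1} onto the annulus {ρ < |w| < 1}, and f is harmonic (f_{z z̄} = 0). -/
/-- Wirtinger derivative `∂f/∂z`. -/
noncomputable def wdz (f : ℂ → ℂ) (z : ℂ) : ℂ :=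
  (fderiv ℝ f z 1 - Complex.I * fderiv ℝ f z Complex.I) / 2

/-- Wirtinger derivative `∂f/∂z̄`. -/
noncomputable def wdzbar (f : ℂ → ℂ) (z : ℂ) : ℂ :=
  (fderiv ℝ f z 1 + Complex.I * fderiv ℝ f z Complex.I) / 2

/-!
Write `a = (rρ-1)/(r²-1)` and `b = (r²-rρ)/(r²-1)`, so that `a + b = 1` and `ar + b/r = ρ`.
Since `1/z̄ = z/|z|²`, the map is radial: `f(z) = (φ(|z|)/|z|) z` with `φ(s) = as + b/s`,
so it maps circles `|z| = s` onto circles `|w| = φ(s)`. The bound `ρ ≤ 2r/(1+r²)` is exactly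
`b ≤ ar²`, which makes `φ` strictly increasing on `[r, 1]`; as `φ(r) = ρ` and `φ(1) = 1`, the
annulus `r < |z| < 1` goes onto `ρ < |w| < 1`. Harmonicity: `z ↦ z` is holomorphic and
`z ↦ 1/z̄` antiholomorphic, so `f_z = a` is constant away from `0` and `f_{z z̄} = 0`.
-/

open Set ComplexConjugate

section Wirtinger

variable {f : ℂ → ℂ} {L : ℂ →L[ℝ] ℂ} {z c d : ℂ}

theorem HasFDerivAt.wdz_eq (hf : HasFDerivAt f L z) (hL : ∀ v, L v = c * v + d * conj v) :
    wdz f z = c := by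
  rw [wdz, hf.fderiv, hL, hL]
  simp only [map_one, Complex.conj_I]
  ring_nf
  simp only [Complex.I_sq]
  ring

theorem HasFDerivAt.wdzbar_eq (hf : HasFDerivAt f L z) (hL : ∀ v, L v = c * v + d * conj v) :
    wdzbar f z = d := by
  rw [wdzbar, hf.fderiv, hL, hL]
  simp only [map_one, Complex.conj_I]
  ring_nf
  simp only [Complex.I_sq]
  ring

theorem wdzbar_eq_zero_of_eventuallyEq_const (hf : f =ᶠ[nhds z] fun _ => c) :
    wdzbar f z = 0 :=
  ((hasFDerivAt_const c z).congr_of_eventuallyEq hf).wdzbar_eq (c := 0) (by simp)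

end Wirtinger

theorem hasFDerivAt_mul_add_mul_conj_inv (a b : ℂ) {z : ℂ} (hz : z ≠ 0) :
    HasFDerivAt (fun z : ℂ => a * z + b * (conj z)⁻¹)
      (a • ContinuousLinearMap.id ℝ ℂ + (-b / conj z ^ 2) • (Complex.conjCLE : ℂ →L[ℝ] ℂ)) z := by
  have hinv : HasFDerivAt (fun w : ℂ => w⁻¹)
      (((1 : ℂ →L[ℂ] ℂ).smulRight (-(conj z ^ 2)⁻¹)).restrictScalars ℝ) (conj z) :=
    ((hasDerivAt_inv (by simpa using hz)).hasFDerivAt).restrictScalars ℝ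
  refine (((hasFDerivAt_id z).const_mul a).add
    ((hinv.comp z Complex.conjCLE.hasFDerivAt).const_mul b)).congr_fderiv ?_
  exact ContinuousLinearMap.ext fun v => by simp [div_eq_mul_inv, mul_comm, mul_left_comm]

theorem wdz_mul_add_mul_conj_inv (a b : ℂ) {z : ℂ} (hz : z ≠ 0) :
    wdz (fun z => a * z + b * (conj z)⁻¹) z = a :=
  (hasFDerivAt_mul_add_mul_conj_inv a b hz).wdz_eq (d := -b / conj z ^ 2) fun v => by simp

theorem wdzbar_wdz_mul_add_mul_conj_inv (a b : ℂ) {z : ℂ} (hz : z ≠ 0) :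
    wdzbar (wdz fun z => a * z + b * (conj z)⁻¹) z = 0 :=
  wdzbar_eq_zero_of_eventuallyEq_const <|
    (eventually_ne_nhds hz).mono fun _ hw => wdz_mul_add_mul_conj_inv a b hw

section Radial

variable {E : Type*} [NormedAddCommGroup E] [NormedSpace ℝ E]

theorem norm_div_norm_smul {t : ℝ} (ht : 0 ≤ t) {x : E} (hx : x ≠ 0) : ‖(t / ‖x‖) • x‖ = t := by
  rw [norm_smul, Real.norm_of_nonneg (by positivity), div_mul_cancel₀ t (norm_ne_zero_iff.2 hx)]

theorem image_radial_setOf_norm_mem {φ : ℝ → ℝ} {S : Set ℝ} (hS : S ⊆ Ioi 0)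
    (hφ : ∀ s ∈ S, 0 < φ s) :
    (fun z : E => (φ ‖z‖ / ‖z‖) • z) '' {z | ‖z‖ ∈ S} = {w | ‖w‖ ∈ φ '' S} := by
  ext w
  constructor
  · rintro ⟨z, hz, rfl⟩
    have hz0 : z ≠ 0 := norm_pos_iff.1 (hS hz)
    exact ⟨‖z‖, hz, (norm_div_norm_smul (hφ _ hz).le hz0).symm⟩
  · rintro ⟨s, hs, hsw⟩
    have hw0 : w ≠ 0 := norm_pos_iff.1 (hsw ▸ hφ s hs)
    have hz : ‖(s / ‖w‖) • w‖ = s := norm_div_norm_smul (le_of_lt (hS hs)) hw0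
    refine ⟨(s / ‖w‖) • w, by simpa [hz] using hs, ?_⟩
    have hs0 : s ≠ 0 := ne_of_gt (hS hs)
    simp only [hz]
    rw [smul_smul, div_mul_div_cancel₀ hs0, hsw, div_self (norm_ne_zero_iff.2 hw0), one_smul]

end Radial

theorem mul_add_mul_conj_inv_eq_smul (a b : ℝ) (z : ℂ) :
    (a : ℂ) * z + (b : ℂ) * (conj z)⁻¹ = ((a * ‖z‖ + b / ‖z‖) / ‖z‖) • z := by
  rcases eq_or_ne z 0 with rfl | hz
  · simp
  have hz' : (‖z‖ : ℂ) ≠ 0 := by simpa using hz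
  rw [Complex.inv_def, Complex.conj_conj, Complex.normSq_conj, Complex.normSq_eq_norm_sq,
    Complex.real_smul]
  push_cast
  field_simp

theorem strictMonoOn_mul_add_div {a b r : ℝ} (ha : 0 < a) (hr : 0 < r) (hb : b ≤ a * r ^ 2) :
    StrictMonoOn (fun s => a * s + b / s) (Ici r) := by
  intro s hs t ht hst
  have hs0 : 0 < s := hr.trans_le hs
  have ht0 : 0 < t := hs0.trans hst
  have hb_lt : b < a * (s * t) :=
    hb.trans_lt (mul_lt_mul_of_pos_left (by nlinarith [mem_Ici.1 hs]) ha)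
  have hdiff : a * t + b / t - (a * s + b / s) = (t - s) * (a * (s * t) - b) / (s * t) := by
    field_simp
    ring
  have hpos : 0 < (t - s) * (a * (s * t) - b) / (s * t) :=
    div_pos (mul_pos (sub_pos.2 hst) (sub_pos.2 hb_lt)) (mul_pos hs0 ht0)
  show a * s + b / s < a * t + b / t
  linarith

theorem nitsche_coeffs {r ρ : ℝ} (hr : 0 < r) (hr1 : r < 1) (hn : ρ ≤ 2 * r / (1 + r ^ 2)) :
    0 < (r * ρ - 1) / (r ^ 2 - 1) ∧
      (r ^ 2 - r * ρ) / (r ^ 2 - 1) ≤ (r * ρ - 1) / (r ^ 2 - 1) * r ^ 2 ∧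
      (r * ρ - 1) / (r ^ 2 - 1) * r + (r ^ 2 - r * ρ) / (r ^ 2 - 1) / r = ρ ∧
      (r * ρ - 1) / (r ^ 2 - 1) + (r ^ 2 - r * ρ) / (r ^ 2 - 1) = 1 := by
  have hden : r ^ 2 - 1 < 0 := by nlinarith
  have hden' : r ^ 2 - 1 ≠ 0 := hden.ne
  rw [le_div_iff₀ (by positivity)] at hn
  refine ⟨div_pos_of_neg_of_neg (by nlinarith) hden, ?_, ?_, ?_⟩
  · rw [div_mul_eq_mul_div, div_le_div_right_of_neg hden]
    nlinarith
  · field_simp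
    ring
  · field_simp
    ring

/-- Nitsche's map `f(z) = ((rρ-1)/(r²-1)) z + ((r²-rρ)/(r²-1)) (1/z̄)` maps the annulus
`{r < |z| < 1}` onto `{ρ < |w| < 1}` and is Euclidean harmonic (`f_{z z̄} = 0`),
whenever `0 < ρ ≤ 2r/(1+r²)`. -/
theorem stmt1 (r ρ : ℝ) (hr : 0 < r) (hr1 : r < 1) (hρ : 0 < ρ)
    (hn : ρ ≤ 2 * r / (1 + r^2))
    (f : ℂ → ℂ)
    (hf : f = fun z : ℂ =>
      (((r * ρ - 1) / (r^2 - 1) : ℝ) : ℂ) * z +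
      (((r^2 - r * ρ) / (r^2 - 1) : ℝ) : ℂ) * (1 / starRingEnd ℂ z)) :
    f '' {z : ℂ | r < ‖z‖ ∧ ‖z‖ < 1} =
        {w : ℂ | ρ < ‖w‖ ∧ ‖w‖ < 1} ∧
    ∀ z ∈ {z : ℂ | r < ‖z‖ ∧ ‖z‖ < 1},
      wdzbar (fun ζ => wdz f ζ) z = 0 := by
  obtain ⟨ha, hb, hab_r, hab_one⟩ := nitsche_coeffs hr hr1 hn
  set a := (r * ρ - 1) / (r ^ 2 - 1)
  set b := (r ^ 2 - r * ρ) / (r ^ 2 - 1)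
  set φ : ℝ → ℝ := fun s => a * s + b / s
  have hφr : φ r = ρ := hab_r
  have hφ1 : φ 1 = 1 := by simpa [φ] using hab_one
  simp only [one_div] at hf
  subst hf
  refine ⟨?_, fun z hz => wdzbar_wdz_mul_add_mul_conj_inv _ _ (norm_pos_iff.1 (hr.trans hz.1))⟩
  have hmono : StrictMonoOn φ (Icc r 1) :=
    (strictMonoOn_mul_add_div ha hr hb).mono Icc_subset_Ici_self
  have hcont : ContinuousOn φ (Icc r 1) :=
    continuousOn_const.mul continuousOn_id |>.add <|
      continuousOn_const.div continuousOn_id fun s hs => (hr.trans_le hs.1).ne'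
  have hφpos : ∀ s ∈ Ioo r 1, 0 < φ s := fun s hs =>
    (hφr ▸ hρ).trans (hmono ⟨le_rfl, hr1.le⟩ (Ioo_subset_Icc_self hs) hs.1)
  simp only [mul_add_mul_conj_inv_eq_smul]
  calc _ = {w : ℂ | ‖w‖ ∈ φ '' Ioo r 1} :=
        image_radial_setOf_norm_mem (fun s hs => hr.trans hs.1) hφpos
    _ = _ := by rw [hcont.image_Ioo_of_strictMonoOn hr1.le hmono, hφr, hφ1]; rfl
end

section
/- Suppose w(z) = g(ρ(z))e^{iΘ(z)} is a harmonic map (with respect to the radial metric h(|w|²)|dw|²) where ρ is the geodesic distance of w(z) from 0 and g is the inverse of s ↦ ∫₀^s h(t²)dt. Then ρ satisfies Δρ = g(ρ)·h(g(ρ)²)·(1 + 2·(h'(g(ρ)²)/h(g(ρ)²))·g(ρ)²)·|∇Θ|². -/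
/-- Euclidean Laplacian of a real function on `ℂ`. -/
noncomputable def lap (f : ℂ → ℝ) (z : ℂ) : ℝ :=
  fderiv ℝ (fun w => fderiv ℝ f w 1) z 1 +
  fderiv ℝ (fun w => fderiv ℝ f w Complex.I) z Complex.I

/-- Squared gradient of a real function on `ℂ`. -/
noncomputable def gradsq (f : ℂ → ℝ) (z : ℂ) : ℝ :=
  (fderiv ℝ f z 1)^2 + (fderiv ℝ f z Complex.I)^2

open Complex

section Directional

variable {E F : Type*} [NormedAddCommGroup E] [NormedSpace ℝ E]
  [NormedAddCommGroup F] [NormedSpace ℝ F]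

lemma ContDiff.differentiable_fderiv_apply {f : E → F} (hf : ContDiff ℝ 2 f) (v : E) :
    Differentiable ℝ (fun x => fderiv ℝ f x v) :=
  ((hf.fderiv_right (m := 1) le_rfl).clm_apply contDiff_const).differentiable one_ne_zero

lemma ContDiff.fderiv_fderiv_apply_comm {f : E → F} (hf : ContDiff ℝ 2 f) (x u v : E) :
    fderiv ℝ (fun y => fderiv ℝ f y v) x u = fderiv ℝ (fun y => fderiv ℝ f y u) x v := by
  have hd : DifferentiableAt ℝ (fderiv ℝ f) x :=
    ((hf.fderiv_right (m := 1) le_rfl).differentiable one_ne_zero) x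
  rw [fderiv_clm_apply hd (differentiableAt_const v),
    fderiv_clm_apply hd (differentiableAt_const u)]
  simpa using (hf.contDiffAt.isSymmSndFDerivAt (by simp)).eq u v

lemma DifferentiableAt.hasFDerivAt_ofReal_comp {R : E → ℝ} {x : E}
    (hR : DifferentiableAt ℝ R x) :
    HasFDerivAt (fun y => (R y : ℂ)) (ofRealCLM.comp (fderiv ℝ R x)) x :=
  ofRealCLM.hasFDerivAt.comp x hR.hasFDerivAt

lemma fderiv_ofReal_apply {R : E → ℝ} {x : E} (hR : DifferentiableAt ℝ R x) (v : E) :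
    fderiv ℝ (fun y => (R y : ℂ)) x v = fderiv ℝ R x v := by
  simp [hR.hasFDerivAt_ofReal_comp.fderiv]

lemma fderiv_mul_exp_I_mul_apply {u : E → ℂ} {Θ : E → ℝ} {x : E} (hu : DifferentiableAt ℝ u x)
    (hΘ : DifferentiableAt ℝ Θ x) (v : E) :
    fderiv ℝ (fun y => u y * exp (I * Θ y)) x v =
      (fderiv ℝ u x v + I * u x * fderiv ℝ Θ x v) * exp (I * Θ x) := by
  have hE : HasFDerivAt (fun y => exp (I * Θ y))
      (exp (I * Θ x) • I • ofRealCLM.comp (fderiv ℝ Θ x)) x :=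
    (hΘ.hasFDerivAt_ofReal_comp.const_mul I).cexp
  rw [HasFDerivAt.fderiv (f := fun y => u y * exp (I * Θ y)) (hu.hasFDerivAt.mul hE)]
  simp only [add_apply, smul_apply, ContinuousLinearMap.comp_apply, ofRealCLM_apply, smul_eq_mul]
  ring

lemma fderiv_fderiv_ofReal_mul_exp_I_mul_apply {R Θ : E → ℝ} (hR : ContDiff ℝ 2 R)
    (hΘ : ContDiff ℝ 2 Θ) (x v : E) :
    fderiv ℝ (fun y => fderiv ℝ (fun y => (R y : ℂ) * exp (I * Θ y)) y v) x v =
      (fderiv ℝ (fun y => fderiv ℝ R y v) x v - R x * fderiv ℝ Θ x v ^ 2 +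
        I * (2 * fderiv ℝ R x v * fderiv ℝ Θ x v + R x * fderiv ℝ (fun y => fderiv ℝ Θ y v) x v)) *
        exp (I * Θ x) := by
  have hR1 := hR.differentiable two_ne_zero
  have hΘ1 := hΘ.differentiable two_ne_zero
  have hR2 := hR.differentiable_fderiv_apply v
  have hΘ2 := hΘ.differentiable_fderiv_apply v
  have hfirst : (fun y => fderiv ℝ (fun y => (R y : ℂ) * exp (I * Θ y)) y v) =
      fun y => ((fderiv ℝ R y v : ℂ) + I * R y * fderiv ℝ Θ y v) * exp (I * Θ y) := by
    ext y
    rw [fderiv_mul_exp_I_mul_apply (hR1 y).hasFDerivAt_ofReal_comp.differentiableAt (hΘ1 y),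
      fderiv_ofReal_apply (hR1 y)]
  have hu : HasFDerivAt (fun y => (fderiv ℝ R y v : ℂ) + I * R y * fderiv ℝ Θ y v) _ x :=
    (hR2 x).hasFDerivAt_ofReal_comp.add
      (((hR1 x).hasFDerivAt_ofReal_comp.const_mul I).mul (hΘ2 x).hasFDerivAt_ofReal_comp)
  rw [hfirst, fderiv_mul_exp_I_mul_apply hu.differentiableAt (hΘ1 x), hu.fderiv]
  simp only [add_apply, smul_apply, ContinuousLinearMap.comp_apply, ofRealCLM_apply, smul_eq_mul]
  linear_combination (R x * fderiv ℝ Θ x v ^ 2 * exp (I * Θ x) : ℂ) * I_sq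

lemma fderiv_fderiv_comp_apply {φ φ' φ'' : ℝ → ℝ} {R : E → ℝ}
    (hφ : ∀ s, HasDerivAt φ (φ' s) s) (hφ' : ∀ s, HasDerivAt φ' (φ'' s) s)
    (hR : ContDiff ℝ 2 R) (x v : E) :
    fderiv ℝ (fun y => fderiv ℝ (φ ∘ R) y v) x v =
      φ' (R x) * fderiv ℝ (fun y => fderiv ℝ R y v) x v + φ'' (R x) * fderiv ℝ R x v ^ 2 := by
  have hR1 := hR.differentiable two_ne_zero
  have hfirst : (fun y => fderiv ℝ (φ ∘ R) y v) = fun y => φ' (R y) * fderiv ℝ R y v := by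
    ext y
    simp [((hφ (R y)).comp_hasFDerivAt y (hR1 y).hasFDerivAt).fderiv]
  have hd : HasFDerivAt (fun y => φ' (R y) * fderiv ℝ R y v) _ x :=
    ((hφ' (R x)).comp_hasFDerivAt x (hR1 x).hasFDerivAt).mul
      ((hR.differentiable_fderiv_apply v) x).hasFDerivAt
  rw [hfirst, hd.fderiv]
  simp only [add_apply, smul_apply, smul_eq_mul, Function.comp_apply]
  ring

end Directional

lemma wdzbar_wdz {f : ℂ → ℂ} (hf : ContDiff ℝ 2 f) (z : ℂ) :
    wdzbar (wdz f) z =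
      (fderiv ℝ (fun ζ => fderiv ℝ f ζ 1) z 1 + fderiv ℝ (fun ζ => fderiv ℝ f ζ I) z I) / 4 := by
  have hwdz : wdz f = fun ζ => (fderiv ℝ f ζ 1 - I * fderiv ℝ f ζ I) * 2⁻¹ := by
    ext ζ
    rw [wdz, div_eq_mul_inv]
  have hd : HasFDerivAt (fun ζ => (fderiv ℝ f ζ 1 - I * fderiv ℝ f ζ I) * 2⁻¹) _ z :=
    (((hf.differentiable_fderiv_apply 1) z).hasFDerivAt.sub
      (((hf.differentiable_fderiv_apply I) z).hasFDerivAt.const_mul I)).mul_const 2⁻¹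
  rw [wdzbar, hwdz, hd.fderiv]
  simp only [smul_apply, sub_apply, smul_eq_mul]
  rw [hf.fderiv_fderiv_apply_comm z I 1]
  linear_combination (-fderiv ℝ (fun ζ => fderiv ℝ f ζ I) z I / 4) * I_sq

lemma wdz_mul_wdzbar (f : ℂ → ℂ) (z : ℂ) :
    wdz f z * wdzbar f z = (fderiv ℝ f z 1 ^ 2 + fderiv ℝ f z I ^ 2) / 4 := by
  rw [wdz, wdzbar]
  linear_combination (-(fderiv ℝ f z I) ^ 2 / 4) * I_sq

/-- The tension field of `w` for the radial metric `h(|w|²)|dw|²`; the real number `c` stands for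
`2 h'(|w|²) / h(|w|²)`. -/
noncomputable def radialTension (c : ℝ) (w : ℂ → ℂ) (z : ℂ) : ℂ :=
  wdzbar (wdz w) z + (c : ℂ) * starRingEnd ℂ (w z) * wdz w z * wdzbar w z

lemma radialTension_ofReal_mul_exp {R Θ : ℂ → ℝ} (hR : ContDiff ℝ 2 R) (hΘ : ContDiff ℝ 2 Θ)
    (c : ℝ) (z : ℂ) :
    radialTension c (fun ζ => (R ζ : ℂ) * exp (I * Θ ζ)) z =
      exp (I * Θ z) / 4 *
        ((lap R z - R z * gradsq Θ z + c * R z * (gradsq R z - R z ^ 2 * gradsq Θ z) : ℝ) +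
          (R z * lap Θ z + 2 * (1 + c * R z ^ 2) *
            (fderiv ℝ R z 1 * fderiv ℝ Θ z 1 + fderiv ℝ R z I * fderiv ℝ Θ z I) : ℝ) * I) := by
  have hw : ContDiff ℝ 2 (fun ζ => (R ζ : ℂ) * exp (I * Θ ζ)) :=
    (ofRealCLM.contDiff.comp hR).mul ((contDiff_const.mul (ofRealCLM.contDiff.comp hΘ)).cexp)
  have hR1 := (hR.differentiable two_ne_zero) z
  have hΘ1 := (hΘ.differentiable two_ne_zero) z
  have hconj : starRingEnd ℂ (exp (I * Θ z)) * exp (I * Θ z) = 1 := by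
    rw [← exp_conj, ← exp_add, map_mul, conj_I, conj_ofReal, neg_mul, neg_add_cancel, exp_zero]
  rw [radialTension, mul_assoc _ (wdz _ z), wdz_mul_wdzbar, wdzbar_wdz hw,
    fderiv_fderiv_ofReal_mul_exp_I_mul_apply hR hΘ, fderiv_fderiv_ofReal_mul_exp_I_mul_apply hR hΘ,
    fderiv_mul_exp_I_mul_apply hR1.hasFDerivAt_ofReal_comp.differentiableAt hΘ1,
    fderiv_mul_exp_I_mul_apply hR1.hasFDerivAt_ofReal_comp.differentiableAt hΘ1,
    fderiv_ofReal_apply hR1, fderiv_ofReal_apply hR1, map_mul, conj_ofReal,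
    lap, lap, gradsq, gradsq]
  push_cast
  linear_combination
    (c * R z * exp (I * Θ z) / 4 *
        ((fderiv ℝ R z 1 + I * R z * fderiv ℝ Θ z 1) ^ 2 +
          (fderiv ℝ R z I + I * R z * fderiv ℝ Θ z I) ^ 2) : ℂ) * hconj +
      (c * R z ^ 3 * exp (I * Θ z) / 4 * (fderiv ℝ Θ z 1 ^ 2 + fderiv ℝ Θ z I ^ 2) : ℂ) * I_sq

lemma lap_eq_of_radialTension_ofReal_mul_exp_eq_zero {R Θ : ℂ → ℝ} (hR : ContDiff ℝ 2 R)
    (hΘ : ContDiff ℝ 2 Θ) {c : ℝ} {z : ℂ}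
    (h : radialTension c (fun ζ => (R ζ : ℂ) * exp (I * Θ ζ)) z = 0) :
    lap R z = R z * gradsq Θ z - c * R z * (gradsq R z - R z ^ 2 * gradsq Θ z) := by
  rw [radialTension_ofReal_mul_exp hR hΘ] at h
  have hre := congrArg re
    ((mul_eq_zero.1 h).resolve_left (div_ne_zero (exp_ne_zero _) (by norm_num)))
  simp only [add_re, ofReal_re, re_ofReal_mul, I_re, mul_zero, add_zero, zero_re] at hre
  linarith

lemma lap_comp {φ φ' φ'' : ℝ → ℝ} {R : ℂ → ℝ} (hφ : ∀ s, HasDerivAt φ (φ' s) s)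
    (hφ' : ∀ s, HasDerivAt φ' (φ'' s) s) (hR : ContDiff ℝ 2 R) (z : ℂ) :
    lap (φ ∘ R) z = φ' (R z) * lap R z + φ'' (R z) * gradsq R z := by
  rw [lap, lap, gradsq, fderiv_fderiv_comp_apply hφ hφ' hR, fderiv_fderiv_comp_apply hφ hφ' hR]
  ring

lemma strictMono_intervalIntegral_of_pos {k : ℝ → ℝ} (hk : Continuous k) (hpos : ∀ t, 0 < k t)
    (a : ℝ) : StrictMono fun s => ∫ t in a..s, k t :=
  strictMono_of_deriv_pos fun s => by
    rw [(hk.integral_hasStrictDerivAt a s).hasDerivAt.deriv]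
    exact hpos s

theorem stmt11_general (h g : ℝ → ℝ) (w : ℂ → ℂ) (ρ Θ : ℂ → ℝ)
    (hpos : ∀ t, 0 < h t) (hh : ContDiff ℝ 2 h) (hgc : ContDiff ℝ 2 g)
    (hρc : ContDiff ℝ 2 ρ) (hΘc : ContDiff ℝ 2 Θ)
    (hρdef : ∀ z, ρ z = ∫ t in (0:ℝ)..(‖w z‖), h (t^2))
    (hginv : ∀ s : ℝ, (∫ t in (0:ℝ)..(g s), h (t^2)) = s)
    (hwdef : ∀ z, w z = ((g (ρ z) : ℝ) : ℂ) * Complex.exp (Complex.I * (Θ z : ℝ)))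
    (hharm : ∀ z, wdzbar (fun ζ => wdz w ζ) z +
      (((2 * (deriv h (‖w z‖ ^ 2) / h (‖w z‖ ^ 2)) : ℝ) : ℂ)) *
        (starRingEnd ℂ (w z)) * wdz w z * wdzbar w z = 0) :
    ∀ z, lap ρ z =
      g (ρ z) * h (g (ρ z)^2) *
        (1 + 2 * (deriv h (g (ρ z)^2) / h (g (ρ z)^2)) * g (ρ z)^2) * gradsq Θ z := by
  have hk : Continuous fun t : ℝ => h (t ^ 2) := hh.continuous.comp (continuous_pow 2)
  have hF : ∀ s, HasDerivAt (fun s => ∫ t in (0:ℝ)..s, h (t ^ 2)) (h (s ^ 2)) s :=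
    fun s => (hk.integral_hasStrictDerivAt 0 s).hasDerivAt
  have hF' : ∀ s, HasDerivAt (fun s => h (s ^ 2)) (2 * s * deriv h (s ^ 2)) s := fun s => by
    rw [mul_comm]
    exact ((hh.differentiable two_ne_zero) (s ^ 2)).hasDerivAt.comp s
      (by simpa using hasDerivAt_pow 2 s)
  have hρ : (fun s => ∫ t in (0:ℝ)..s, h (t ^ 2)) ∘ (g ∘ ρ) = ρ := funext fun ζ => hginv (ρ ζ)
  have hnorm : ∀ ζ, ‖w ζ‖ = g (ρ ζ) := fun ζ =>
    (strictMono_intervalIntegral_of_pos hk (fun t => hpos _) 0).injective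
      ((hρdef ζ).symm.trans (hginv (ρ ζ)).symm)
  intro z
  have hharm' : radialTension (2 * (deriv h (g (ρ z) ^ 2) / h (g (ρ z) ^ 2)))
      (fun ζ => (g (ρ ζ) : ℂ) * exp (I * Θ ζ)) z = 0 := by
    have := hharm z
    rwa [hnorm z, funext hwdef] at this
  have hΔR : lap (g ∘ ρ) z = _ :=
    lap_eq_of_radialTension_ofReal_mul_exp_eq_zero (hgc.comp hρc) hΘc hharm'
  conv_lhs => rw [← hρ]
  rw [lap_comp hF hF' (hgc.comp hρc), hΔR]
  simp only [Function.comp_apply]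
  field_simp [(hpos (g (ρ z) ^ 2)).ne']
  ring

/-- If `w(z) = g(ρ(z)) e^{iΘ(z)}` is harmonic for the radial metric `h(|w|²)|dw|²`,
where `ρ` is the geodesic distance of `w(z)` from `0` and `g` is the inverse of
`s ↦ ∫₀^s h(t²) dt`, then
`Δρ = g(ρ)·h(g(ρ)²)·(1 + 2 (h'(g(ρ)²)/h(g(ρ)²)) g(ρ)²)·|∇Θ|²`. -/
theorem stmt11 (h g : ℝ → ℝ) (w : ℂ → ℂ) (ρ Θ : ℂ → ℝ)
    (hpos : ∀ t, 0 < h t) (hh : ContDiff ℝ 2 h) (hgc : ContDiff ℝ 2 g)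
    (hw : ContDiff ℝ 2 w) (hρc : ContDiff ℝ 2 ρ) (hΘc : ContDiff ℝ 2 Θ)
    (hρdef : ∀ z, ρ z = ∫ t in (0:ℝ)..(‖w z‖), h (t^2))
    (hginv : ∀ s : ℝ, (∫ t in (0:ℝ)..(g s), h (t^2)) = s)
    (hwdef : ∀ z, w z = ((g (ρ z) : ℝ) : ℂ) * Complex.exp (Complex.I * (Θ z : ℝ)))
    (hharm : ∀ z, wdzbar (fun ζ => wdz w ζ) z +
      (((2 * (deriv h (‖w z‖ ^ 2) / h (‖w z‖ ^ 2)) : ℝ) : ℂ)) *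
        (starRingEnd ℂ (w z)) * wdz w z * wdzbar w z = 0) :
    ∀ z, lap ρ z =
      g (ρ z) * h (g (ρ z)^2) *
        (1 + 2 * (deriv h (g (ρ z)^2) / h (g (ρ z)^2)) * g (ρ z)^2) * gradsq Θ z :=
  stmt11_general h g w ρ Θ hpos hh hgc hρc hΘc hρdef hginv hwdef hharm
end

section
/- Let y : ℝ → (0,1) be a C² solution of y'' - y = (2y/(y²-1))(y'² - y²). Then along any solution the quantity (y'² - y²)/(1-y²)² is constant; equivalently y satisfies y'² = y² + c(1-y²)² for some constant c. -/
/-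
Writing `N = y'² - y²` and `D = (1 - y²)²`, a direct computation gives
`(N / D)' = 2 y' (y'' - y - 2y N / (y² - 1)) / D`, so the quotient has zero derivative exactly
along solutions of the ODE and is therefore constant on `ℝ`.
-/

noncomputable def radialFirstIntegral (y : ℝ → ℝ) (x : ℝ) : ℝ :=
  ((deriv y x) ^ 2 - y x ^ 2) / (1 - y x ^ 2) ^ 2

theorem hasDerivAt_radialFirstIntegral {y : ℝ → ℝ} {x : ℝ} (hy : DifferentiableAt ℝ y x)
    (hy' : DifferentiableAt ℝ (deriv y) x) (hx : y x ^ 2 ≠ 1) :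
    HasDerivAt (radialFirstIntegral y)
      (2 * deriv y x * (deriv (deriv y) x - y x -
        2 * y x / (y x ^ 2 - 1) * ((deriv y x) ^ 2 - y x ^ 2)) / (1 - y x ^ 2) ^ 2) x := by
  have hsub : 1 - y x ^ 2 ≠ 0 := sub_ne_zero.mpr hx.symm
  have hnum := (hy'.hasDerivAt.fun_pow 2).fun_sub (hy.hasDerivAt.fun_pow 2)
  have hden := ((hasDerivAt_const x (1 : ℝ)).fun_sub (hy.hasDerivAt.fun_pow 2)).fun_pow 2
  refine (hnum.fun_div hden (pow_ne_zero 2 hsub)).congr_deriv ?_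
  have hsub' : y x ^ 2 - 1 ≠ 0 := sub_ne_zero.mpr hx
  field_simp
  ring

/-- First integral of the radial hyperbolic-harmonic ODE: if `y : ℝ → (0,1)` is C² and
solves `y'' - y = (2y/(y²-1))(y'² - y²)`, then `(y'² - y²)/(1-y²)²` is constant;
equivalently `y'² = y² + c(1-y²)²` for some constant `c`. -/
theorem stmt18 (y : ℝ → ℝ) (hy : ContDiff ℝ 2 y)
    (h01 : ∀ x, 0 < y x ∧ y x < 1)
    (hode : ∀ x, deriv (deriv y) x - y x =
      (2 * y x / (y x ^ 2 - 1)) * ((deriv y x)^2 - y x ^ 2)) :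
    (∃ C : ℝ, ∀ x, ((deriv y x)^2 - y x ^ 2) / (1 - y x ^ 2)^2 = C) ∧
    (∃ c : ℝ, ∀ x, (deriv y x)^2 = y x ^ 2 + c * (1 - y x ^ 2)^2) := by
  have hdy : Differentiable ℝ y := hy.differentiable (by norm_num)
  have hddy : Differentiable ℝ (deriv y) := hy.differentiable_deriv_two
  have hsq : ∀ x, y x ^ 2 ≠ 1 := fun x ↦ by
    nlinarith [h01 x]
  have hder : ∀ x, HasDerivAt (radialFirstIntegral y) 0 x := fun x ↦ by
    simpa [sub_eq_zero.mpr (hode x)] using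
      hasDerivAt_radialFirstIntegral (hdy x) (hddy x) (hsq x)
  have hconst : ∀ x, radialFirstIntegral y x = radialFirstIntegral y 0 := fun x ↦
    is_const_of_deriv_eq_zero (fun z ↦ (hder z).differentiableAt) (fun z ↦ (hder z).deriv) x 0
  refine ⟨⟨_, hconst⟩, ⟨radialFirstIntegral y 0, fun x ↦ ?_⟩⟩
  have h := hconst x
  rw [radialFirstIntegral, div_eq_iff (pow_ne_zero 2 (sub_ne_zero.mpr (hsq x).symm))] at h
  linarith
end
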